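/- Let p ∈ (0,1/2], λ ∈ (0,1], β ≥ 0 and α ∈ (0,1] with α ≤ λ(1−p)/(2p). Let S be a random variable with 0 ≤ S ≤ 2 almost surely such that P[S ≥ ρ·α] ≤ β/ρ for every real ρ ≥ 1. Then 𝔼[ S · 1{S ≥ (1−p)λ/p} ] ≤ 2αβ·log(1/λ) + 2αβ. -/

import Mathlib

/-!
Layer cake: with `T = (1 - p) λ / p`, the truncated variable `S · 1{S ≥ T}` exceeds `t > 0` only
if `S ≥ max t T`. As `max t T ≥ T ≥ α`, the tail hypothesis at `ρ = max t T / α` bounds this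
probability by `αβ / max t T`, and it vanishes for `t > 2`. Integrating over `t` gives at most
`αβ + αβ ln (2 / T) ≤ αβ (1 + ln 2 + ln (1 / λ))`, since `T ≥ λ` when `p ≤ 1/2`.
-/

open MeasureTheory ENNReal Set

theorem integral_le_setIntegral_of_meas_lt_le {Ω : Type*} [MeasurableSpace Ω] {μ : Measure Ω}
    {f : Ω → ℝ} {φ : ℝ → ℝ} (hf_nn : 0 ≤ᵐ[μ] f) (hf : AEMeasurable f μ)
    (hφ : IntegrableOn φ (Ioi 0)) (hφ_nn : ∀ t ∈ Ioi (0 : ℝ), 0 ≤ φ t)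
    (h : ∀ t ∈ Ioi (0 : ℝ), μ {ω | t < f ω} ≤ ENNReal.ofReal (φ t)) :
    ∫ ω, f ω ∂μ ≤ ∫ t in Ioi 0, φ t := by
  rw [integral_eq_lintegral_of_nonneg_ae hf_nn hf.aestronglyMeasurable]
  refine ENNReal.toReal_le_of_le_ofReal (setIntegral_nonneg measurableSet_Ioi hφ_nn) ?_
  rw [lintegral_eq_lintegral_meas_lt μ hf_nn hf,
    ofReal_integral_eq_lintegral_ofReal hφ ((ae_restrict_iff' measurableSet_Ioi).2 (ae_of_all _ hφ_nn))]
  exact setLIntegral_mono' measurableSet_Ioi h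

theorem meas_le_le_of_tail {Ω : Type*} [MeasurableSpace Ω] {μ : Measure Ω} {S : Ω → ℝ}
    {α β : ℝ} (hα : 0 < α)
    (htail : ∀ ρ : ℝ, 1 ≤ ρ → μ {ω | ρ * α ≤ S ω} ≤ ENNReal.ofReal (β / ρ))
    {t : ℝ} (ht : α ≤ t) : μ {ω | t ≤ S ω} ≤ ENNReal.ofReal (α * β / t) := by
  simpa [div_mul_cancel₀ t hα.ne', div_div_eq_mul_div, mul_comm β α]
    using htail (t / α) ((one_le_div hα).2 ht)

theorem setOf_lt_ite_subset {Ω : Type*} (S : Ω → ℝ) (T : ℝ) {t : ℝ} (ht : 0 ≤ t) :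
    {ω | t < if T ≤ S ω then S ω else 0} ⊆ {ω | max t T ≤ S ω} := by
  intro ω hω
  simp only [mem_ofPred_eq] at hω ⊢
  split_ifs at hω with hT
  · exact max_le hω.le hT
  · linarith

/-- The second piece starts at `a` rather than at `T`, so that the integral of the profile does not
depend on `T`; for `a ≤ T` it still dominates `c / max t T` on `(0, b]`. -/
noncomputable def tailProfile (c T a b t : ℝ) : ℝ :=
  (Ioc 0 T).indicator (fun _ => c / T) t + (Ioc a b).indicator (fun s => c / s) t

theorem tailProfile_nonneg {c T a b t : ℝ} (hc : 0 ≤ c) (hT : 0 ≤ T) (ha : 0 ≤ a) :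
    0 ≤ tailProfile c T a b t := by
  unfold tailProfile
  refine add_nonneg (indicator_nonneg (fun _ _ => by positivity) _)
    (indicator_nonneg (fun s hs => div_nonneg hc (ha.trans hs.1.le)) _)

theorem div_max_le_tailProfile {c T a b t : ℝ} (hc : 0 ≤ c) (ha : 0 ≤ a) (haT : a ≤ T)
    (ht : 0 < t) (htb : t ≤ b) : c / max t T ≤ tailProfile c T a b t := by
  unfold tailProfile
  rcases le_or_gt t T with htT | hTt
  · rw [max_eq_right htT, indicator_of_mem (show t ∈ Ioc 0 T from ⟨ht, htT⟩)]
    exact le_add_of_nonneg_right (indicator_nonneg (fun s hs => div_nonneg hc (ha.trans hs.1.le)) _)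
  · rw [max_eq_left hTt.le, indicator_of_notMem (fun h => hTt.not_ge h.2),
      indicator_of_mem (show t ∈ Ioc a b from ⟨haT.trans_lt hTt, htb⟩), zero_add]

theorem integrableOn_const_div_Ioc (c : ℝ) {a : ℝ} (b : ℝ) (ha : 0 < a) :
    IntegrableOn (fun s : ℝ => c / s) (Ioc a b) :=
  ((continuousOn_const.div continuousOn_id fun _ hs => (ha.trans_le hs.1).ne').integrableOn_Icc
    ).mono_set Ioc_subset_Icc_self

theorem integrable_indicator_Ioc_const (c T : ℝ) :
    Integrable ((Ioc 0 T).indicator (fun _ => c / T)) :=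
  (integrableOn_const measure_Ioc_lt_top.ne).integrable_indicator measurableSet_Ioc

theorem integrableOn_tailProfile (c T : ℝ) {a : ℝ} (b : ℝ) (ha : 0 < a) :
    IntegrableOn (tailProfile c T a b) (Ioi 0) :=
  ((integrable_indicator_Ioc_const c T).add
    ((integrableOn_const_div_Ioc c b ha).integrable_indicator measurableSet_Ioc)).integrableOn

theorem setIntegral_tailProfile (c : ℝ) {T a b : ℝ} (hT : 0 < T) (ha : 0 < a) (hab : a ≤ b) :
    ∫ t in Ioi 0, tailProfile c T a b t = c + c * Real.log (b / a) := by
  unfold tailProfile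
  rw [integral_add (integrable_indicator_Ioc_const c T).integrableOn
      ((integrableOn_const_div_Ioc c b ha).integrable_indicator measurableSet_Ioc).integrableOn,
    setIntegral_indicator measurableSet_Ioc, setIntegral_indicator measurableSet_Ioc,
    inter_eq_right.2 Ioc_subset_Ioi_self,
    inter_eq_right.2 (Ioc_subset_Ioi_self.trans (Ioi_subset_Ioi ha.le)),
    setIntegral_const, Real.volume_real_Ioc_of_le hT.le, smul_eq_mul, sub_zero,
    mul_div_cancel₀ c hT.ne', ← intervalIntegral.integral_of_le hab]
  simp_rw [div_eq_mul_inv c]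
  rw [intervalIntegral.integral_const_mul, integral_inv_of_pos ha (ha.trans_le hab)]

theorem meas_lt_ite_le_tailProfile {Ω : Type*} [MeasurableSpace Ω] {μ : Measure Ω} {S : Ω → ℝ}
    {α β T l : ℝ} (hα : 0 < α) (hβ : 0 ≤ β) (hαT : α ≤ T) (hl : 0 ≤ l) (hlT : l ≤ T)
    (hS2 : ∀ᵐ ω ∂μ, S ω ≤ 2)
    (htail : ∀ ρ : ℝ, 1 ≤ ρ → μ {ω | ρ * α ≤ S ω} ≤ ENNReal.ofReal (β / ρ))
    {t : ℝ} (ht : 0 < t) :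
    μ {ω | t < if T ≤ S ω then S ω else 0} ≤ ENNReal.ofReal (tailProfile (α * β) T l 2 t) := by
  refine (measure_mono (setOf_lt_ite_subset S T ht.le)).trans ?_
  rcases le_or_gt t 2 with ht2 | ht2
  · exact (meas_le_le_of_tail hα htail (hαT.trans (le_max_right t T))).trans
      (ENNReal.ofReal_le_ofReal (div_max_le_tailProfile (by positivity) hl hlT ht ht2))
  · have hnull : μ {ω | max t T ≤ S ω} = 0 :=
      measure_mono_null (fun ω hω hω2 => (ht2.trans_le ((le_max_left t T).trans hω)).not_ge hω2)
        (ae_iff.1 hS2)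
    exact hnull.le.trans zero_le

theorem mul_one_add_log_two_div_le {c l : ℝ} (hc : 0 ≤ c) (hl0 : 0 < l) (hl1 : l ≤ 1) :
    c + c * Real.log (2 / l) ≤ 2 * c * Real.logb 2 (1 / l) + 2 * c := by
  have hlog2 : Real.log 2 < 1 := Real.log_two_lt_d9.trans (by norm_num)
  have hlogb : 0 ≤ Real.logb 2 (1 / l) := Real.logb_nonneg one_lt_two (one_le_one_div hl0 hl1)
  have hsplit : Real.log (2 / l) = Real.log 2 + Real.log 2 * Real.logb 2 (1 / l) := by
    rw [Real.logb, mul_div_cancel₀ _ (Real.log_pos one_lt_two).ne', Real.log_div two_ne_zero hl0.ne',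
      one_div, Real.log_inv, sub_eq_add_neg]
  rw [hsplit]
  nlinarith [mul_nonneg hc hlogb, mul_nonneg (mul_nonneg hc hlogb) (sub_nonneg.2 hlog2.le)]

theorem expectation_gap_nonsimilar
    {Ω : Type*} [MeasurableSpace Ω] (μ : Measure Ω)
    (p l α β : ℝ)
    (hp0 : 0 < p) (hp2 : p ≤ 1 / 2) (hl0 : 0 < l) (hl1 : l ≤ 1)
    (hβ : 0 ≤ β) (hα0 : 0 < α) (hαl : α ≤ l * (1 - p) / (2 * p))
    (S : Ω → ℝ) (hS : Measurable S)
    (hSrange : ∀ᵐ ω ∂μ, S ω ∈ Set.Icc (0 : ℝ) 2)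
    (htail : ∀ ρ : ℝ, 1 ≤ ρ → μ {ω | ρ * α ≤ S ω} ≤ ENNReal.ofReal (β / ρ)) :
    ∫ ω, (if (1 - p) * l / p ≤ S ω then S ω else 0) ∂μ
      ≤ 2 * α * β * Real.logb 2 (1 / l) + 2 * α * β := by
  set T := (1 - p) * l / p
  have hT0 : 0 < T := div_pos (mul_pos (by linarith) hl0) hp0
  have hlT : l ≤ T := by rw [le_div_iff₀ hp0]; nlinarith
  have hαT : α ≤ T := by
    have : l * (1 - p) / (2 * p) = T / 2 := by ring
    linarith
  have hg_nn : 0 ≤ᵐ[μ] fun ω => if T ≤ S ω then S ω else 0 := by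
    filter_upwards [hSrange] with ω hω
    split_ifs
    exacts [hω.1, le_rfl]
  have hg : Measurable fun ω => if T ≤ S ω then S ω else 0 :=
    Measurable.ite (measurableSet_le measurable_const hS) hS measurable_const
  calc ∫ ω, (if T ≤ S ω then S ω else 0) ∂μ
      ≤ ∫ t in Ioi 0, tailProfile (α * β) T l 2 t :=
        integral_le_setIntegral_of_meas_lt_le hg_nn hg.aemeasurable
          (integrableOn_tailProfile _ _ _ hl0)
          (fun _ _ => tailProfile_nonneg (by positivity) hT0.le hl0.le)
          (fun _ ht => meas_lt_ite_le_tailProfile hα0 hβ hαT hl0.le hlT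
            (hSrange.mono fun _ h => h.2) htail ht)
    _ = α * β + α * β * Real.log (2 / l) := setIntegral_tailProfile _ hT0 hl0 (by linarith)
    _ ≤ 2 * α * β * Real.logb 2 (1 / l) + 2 * α * β := by
        have := mul_one_add_log_two_div_le (mul_nonneg hα0.le hβ) hl0 hl1
        linarith
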